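/- Let V : ℝ → ℝ, let α < β be real numbers, and let x_α < x_β. Suppose ψ_α, ψ_β : ℝ → ℝ solve the Schrödinger equation with potential V and eigenvalues α and β respectively on [x_α, x_β], with continuous first derivatives there. Assume ψ_α(x_α) = 0, ψ_α'(x_α) > 0, ψ_β(x_α) > 0, and ψ_α(x) > 0 and ψ_β(x) > 0 for all x ∈ (x_α, x_β). Then for every real constant c, the set {x ∈ (x_α, x_β) : ψ_α(x) = c ψ_β(x)} contains at most one point. -/

import Mathlib

/-!
The Wronskian `W = ψβ ψα' - ψβ' ψα` satisfies `W' = (β - α) ψα ψβ` by the two Schrödinger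
equations, so it is strictly increasing on `[x_α, x_β]`; as `W(x_α) = ψβ(x_α) ψα'(x_α) > 0`,
it is positive inside. Since `(ψα / ψβ)' = W / ψβ²`, the ratio `ψα / ψβ` is strictly
increasing on `(x_α, x_β)` and so takes the value `c` at most once.
-/

open Set

def wronskian (f f' g g' : ℝ → ℝ) (x : ℝ) : ℝ := f x * g' x - f' x * g x

theorem hasDerivAt_wronskian_of_schrodinger {V f f' f'' g g' g'' : ℝ → ℝ} {E₁ E₂ x : ℝ}
    (hf : HasDerivAt f (f' x) x) (hf' : HasDerivAt f' (f'' x) x)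
    (hg : HasDerivAt g (g' x) x) (hg' : HasDerivAt g' (g'' x) x)
    (hfeq : -f'' x + V x * f x = E₁ * f x) (hgeq : -g'' x + V x * g x = E₂ * g x) :
    HasDerivAt (wronskian f f' g g') ((E₁ - E₂) * (f x * g x)) x :=
  ((hf.mul hg').sub (hf'.mul hg)).congr_deriv (by linear_combination g x * hfeq - f x * hgeq)

theorem strictMonoOn_of_hasDerivAt_pos {s : Set ℝ} (hs : Convex ℝ s) {f f' : ℝ → ℝ}
    (hf : ∀ x ∈ s, HasDerivAt f (f' x) x) (hpos : ∀ x ∈ interior s, 0 < f' x) :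
    StrictMonoOn f s :=
  strictMonoOn_of_hasDerivWithinAt_pos hs (fun x hx ↦ (hf x hx).continuousAt.continuousWithinAt)
    (fun x hx ↦ (hf x (interior_subset hx)).hasDerivWithinAt) hpos

theorem wronskian_pos_of_schrodinger {V f f' f'' g g' g'' : ℝ → ℝ} {E₁ E₂ a b : ℝ}
    (hE : E₂ < E₁)
    (hf : ∀ x ∈ Icc a b, HasDerivAt f (f' x) x) (hf' : ∀ x ∈ Icc a b, HasDerivAt f' (f'' x) x)
    (hg : ∀ x ∈ Icc a b, HasDerivAt g (g' x) x) (hg' : ∀ x ∈ Icc a b, HasDerivAt g' (g'' x) x)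
    (hfeq : ∀ x ∈ Icc a b, -f'' x + V x * f x = E₁ * f x)
    (hgeq : ∀ x ∈ Icc a b, -g'' x + V x * g x = E₂ * g x)
    (hfg : ∀ x ∈ Ioo a b, 0 < f x * g x) (ha : 0 ≤ wronskian f f' g g' a) :
    ∀ x ∈ Ioo a b, 0 < wronskian f f' g g' x := by
  have hmono : StrictMonoOn (wronskian f f' g g') (Icc a b) := by
    refine strictMonoOn_of_hasDerivAt_pos (convex_Icc a b) (fun x hx ↦
      hasDerivAt_wronskian_of_schrodinger (hf x hx) (hf' x hx) (hg x hx) (hg' x hx)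
        (hfeq x hx) (hgeq x hx)) ?_
    rw [interior_Icc]
    exact fun x hx ↦ mul_pos (sub_pos.2 hE) (hfg x hx)
  intro x hx
  exact ha.trans_lt <|
    hmono (left_mem_Icc.2 (hx.1.trans hx.2).le) (Ioo_subset_Icc_self hx) hx.1

theorem strictMonoOn_div_of_wronskian_pos {s : Set ℝ} (hs : Convex ℝ s) {f f' g g' : ℝ → ℝ}
    (hf : ∀ x ∈ s, HasDerivAt f (f' x) x) (hg : ∀ x ∈ s, HasDerivAt g (g' x) x)
    (hg0 : ∀ x ∈ s, g x ≠ 0) (hW : ∀ x ∈ interior s, 0 < wronskian g g' f f' x) :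
    StrictMonoOn (fun x ↦ f x / g x) s := by
  refine strictMonoOn_of_hasDerivAt_pos hs (fun x hx ↦ (hf x hx).div (hg x hx) (hg0 x hx))
    fun x hx ↦ div_pos ?_ (sq_pos_of_ne_zero (hg0 x (interior_subset hx)))
  have := hW x hx
  rw [wronskian] at this
  linarith

theorem StrictMonoOn.subsingleton_setOf_eq_const_mul {s : Set ℝ} {f g : ℝ → ℝ}
    (hmono : StrictMonoOn (fun x ↦ f x / g x) s) (hg0 : ∀ x ∈ s, g x ≠ 0) (c : ℝ) :
    {x ∈ s | f x = c * g x}.Subsingleton := by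
  rintro x ⟨hxs, hx⟩ y ⟨hys, hy⟩
  refine hmono.injOn hxs hys ?_
  simp only [hx, hy, mul_div_cancel_right₀ _ (hg0 x hxs), mul_div_cancel_right₀ _ (hg0 y hys)]

theorem at_most_one_transition_point_general
    (V : ℝ → ℝ) (α β : ℝ) (hαβ : α < β) (xα xβ : ℝ)
    (ψα ψα' ψα'' ψβ ψβ' ψβ'' : ℝ → ℝ)
    (hψα1 : ∀ x ∈ Set.Icc xα xβ, HasDerivAt ψα (ψα' x) x)
    (hψα2 : ∀ x ∈ Set.Icc xα xβ, HasDerivAt ψα' (ψα'' x) x)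
    (hψβ1 : ∀ x ∈ Set.Icc xα xβ, HasDerivAt ψβ (ψβ' x) x)
    (hψβ2 : ∀ x ∈ Set.Icc xα xβ, HasDerivAt ψβ' (ψβ'' x) x)
    (heqα : ∀ x ∈ Set.Icc xα xβ, -ψα'' x + V x * ψα x = α * ψα x)
    (heqβ : ∀ x ∈ Set.Icc xα xβ, -ψβ'' x + V x * ψβ x = β * ψβ x)
    (hzα : ψα xα = 0) (hdα : 0 < ψα' xα) (hβ0 : 0 < ψβ xα)
    (hposα : ∀ x ∈ Set.Ioo xα xβ, 0 < ψα x)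
    (hposβ : ∀ x ∈ Set.Ioo xα xβ, 0 < ψβ x) :
    ∀ c : ℝ, {x ∈ Set.Ioo xα xβ | ψα x = c * ψβ x}.Subsingleton := by
  have hψβ0 : ∀ x ∈ Ioo xα xβ, ψβ x ≠ 0 := fun x hx ↦ (hposβ x hx).ne'
  have hW₀ : 0 ≤ wronskian ψβ ψβ' ψα ψα' xα := by
    rw [wronskian, hzα, mul_zero, sub_zero]
    exact (mul_pos hβ0 hdα).le
  have hW : ∀ x ∈ Ioo xα xβ, 0 < wronskian ψβ ψβ' ψα ψα' x :=
    wronskian_pos_of_schrodinger hαβ hψβ1 hψβ2 hψα1 hψα2 heqβ heqα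
      (fun x hx ↦ mul_pos (hposβ x hx) (hposα x hx)) hW₀
  have hmono : StrictMonoOn (fun x ↦ ψα x / ψβ x) (Ioo xα xβ) :=
    strictMonoOn_div_of_wronskian_pos (convex_Ioo xα xβ)
      (fun x hx ↦ hψα1 x (Ioo_subset_Icc_self hx)) (fun x hx ↦ hψβ1 x (Ioo_subset_Icc_self hx))
      hψβ0 (by rwa [interior_Ioo])
  exact hmono.subsingleton_setOf_eq_const_mul hψβ0

/-- At most one transition point: with `ψα, ψβ` solving the Schrödinger equation at energies
`α < β` on `[x_α, x_β]`, `ψα(x_α) = 0`, `ψα'(x_α) > 0`, `ψβ(x_α) > 0` and both positive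
inside, for every constant `c` the equation `ψα = c ψβ` has at most one solution in
`(x_α, x_β)`. -/
theorem at_most_one_transition_point
    (V : ℝ → ℝ) (α β : ℝ) (hαβ : α < β) (xα xβ : ℝ) (hx : xα < xβ)
    (ψα ψα' ψα'' ψβ ψβ' ψβ'' : ℝ → ℝ)
    (hψα1 : ∀ x ∈ Set.Icc xα xβ, HasDerivAt ψα (ψα' x) x)
    (hψα2 : ∀ x ∈ Set.Icc xα xβ, HasDerivAt ψα' (ψα'' x) x)
    (hψαc : ContinuousOn ψα' (Set.Icc xα xβ))
    (hψβ1 : ∀ x ∈ Set.Icc xα xβ, HasDerivAt ψβ (ψβ' x) x)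
    (hψβ2 : ∀ x ∈ Set.Icc xα xβ, HasDerivAt ψβ' (ψβ'' x) x)
    (hψβc : ContinuousOn ψβ' (Set.Icc xα xβ))
    (heqα : ∀ x ∈ Set.Icc xα xβ, -ψα'' x + V x * ψα x = α * ψα x)
    (heqβ : ∀ x ∈ Set.Icc xα xβ, -ψβ'' x + V x * ψβ x = β * ψβ x)
    (hzα : ψα xα = 0) (hdα : 0 < ψα' xα) (hβ0 : 0 < ψβ xα)
    (hposα : ∀ x ∈ Set.Ioo xα xβ, 0 < ψα x)
    (hposβ : ∀ x ∈ Set.Ioo xα xβ, 0 < ψβ x) :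
    ∀ c : ℝ, {x ∈ Set.Ioo xα xβ | ψα x = c * ψβ x}.Subsingleton :=
  at_most_one_transition_point_general V α β hαβ xα xβ ψα ψα' ψα'' ψβ ψβ' ψβ'' hψα1 hψα2 hψβ1 hψβ2
    heqα heqβ hzα hdα hβ0 hposα hposβ
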